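/- Let M ∈ ℝ^{n×n} and P ∈ ℝ^{n×n} with P symmetric positive definite and Mᵀ P + P M negative definite. Then every eigenvalue of M has strictly negative real part. -/

import Mathlib

/-!
For an eigenpair `M v = μ v` one has `v*(Mᴴ P + P M) v = 2 Re μ · v*P v`; the left side is negative
and `v*P v ≥ 0`, so `Re μ < 0`. The real hypotheses pass to the complexification because
`Re (v*P v) = xᵀP x + yᵀP y` for `v = x + i y`.
-/

open Matrix
open scoped ComplexOrder

namespace Matrix

variable {ι : Type*} [Fintype ι]

theorem exists_mulVec_eq_smul_of_mem_spectrum {K : Type*} [Field K] [DecidableEq ι]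
    {A : Matrix ι ι K} {μ : K} (hμ : μ ∈ spectrum K A) : ∃ v ≠ 0, A *ᵥ v = μ • v := by
  rw [← spectrum_toLin', ← Module.End.hasEigenvalue_iff_mem_spectrum] at hμ
  obtain ⟨v, hv⟩ := hμ.exists_hasEigenvector
  exact ⟨v, hv.2, by simpa using hv.apply_eq_smul⟩

variable {𝕜 : Type*} [RCLike 𝕜]

theorem re_star_dotProduct_map_algebraMap_mulVec (P : Matrix ι ι ℝ) (v : ι → 𝕜) :
    RCLike.re (star v ⬝ᵥ (P.map (algebraMap ℝ 𝕜) *ᵥ v)) =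
      (RCLike.re ∘ v) ⬝ᵥ (P *ᵥ (RCLike.re ∘ v)) + (RCLike.im ∘ v) ⬝ᵥ (P *ᵥ (RCLike.im ∘ v)) := by
  simp only [dotProduct, mulVec, Finset.mul_sum, ← Finset.sum_add_distrib, map_sum]
  refine Finset.sum_congr rfl fun i _ => Finset.sum_congr rfl fun j _ => ?_
  simp [RCLike.mul_re]

theorem PosDef.map_algebraMap {P : Matrix ι ι ℝ} (hP : P.PosDef) :
    (P.map (algebraMap ℝ 𝕜)).PosDef := by
  have hherm : (P.map (algebraMap ℝ 𝕜)).IsHermitian :=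
    hP.isHermitian.map _ fun r => by simp
  refine .of_dotProduct_mulVec_pos hherm fun v hv => RCLike.pos_iff.mpr
    ⟨?_, hherm.im_star_dotProduct_mulVec_self v⟩
  rw [re_star_dotProduct_map_algebraMap_mulVec]
  have hre := hP.posSemidef.dotProduct_mulVec_nonneg (RCLike.re ∘ v)
  have him := hP.posSemidef.dotProduct_mulVec_nonneg (RCLike.im ∘ v)
  have hre_or_him : RCLike.re ∘ v ≠ 0 ∨ RCLike.im ∘ v ≠ 0 := by
    by_contra! h
    exact hv <| funext fun i => RCLike.ext (by simpa using congrFun h.1 i)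
      (by simpa using congrFun h.2 i)
  simp only [star_trivial] at hre him
  rcases hre_or_him with h | h
  · linarith [star_trivial (RCLike.re ∘ v) ▸ hP.dotProduct_mulVec_pos h]
  · linarith [star_trivial (RCLike.im ∘ v) ▸ hP.dotProduct_mulVec_pos h]

theorem star_dotProduct_conjTranspose_mul_add_mul_mulVec {M P : Matrix ι ι 𝕜} {μ : 𝕜}
    {v : ι → 𝕜} (hv : M *ᵥ v = μ • v) :
    star v ⬝ᵥ ((Mᴴ * P + P * M) *ᵥ v) = ((2 * RCLike.re μ : ℝ) : 𝕜) * (star v ⬝ᵥ (P *ᵥ v)) := by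
  rw [add_mulVec, dotProduct_add, ← mulVec_mulVec, ← mulVec_mulVec, dotProduct_mulVec (star v),
    vecMul_conjTranspose, star_star, hv, star_smul, smul_dotProduct, mulVec_smul, dotProduct_smul,
    smul_eq_mul, smul_eq_mul, ← add_mul, RCLike.star_def, add_comm, RCLike.add_conj]
  push_cast
  ring

theorem re_lt_zero_of_lyapunov {M P : Matrix ι ι 𝕜} (hP : P.PosSemidef)
    (hL : (-(Mᴴ * P + P * M)).PosDef) {μ : 𝕜} {v : ι → 𝕜} (hv0 : v ≠ 0)
    (hv : M *ᵥ v = μ • v) : RCLike.re μ < 0 := by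
  have hpos := hL.re_dotProduct_pos hv0
  rw [neg_mulVec, dotProduct_neg, star_dotProduct_conjTranspose_mul_add_mul_mulVec hv, map_neg,
    RCLike.re_ofReal_mul] at hpos
  have h2re := neg_of_mul_neg_left (neg_pos.mp hpos) (hP.re_dotProduct_nonneg v)
  linarith

end Matrix

theorem lyapunov_implies_hurwitz {n : ℕ}
    (M P : Matrix (Fin n) (Fin n) ℝ)
    (hP : P.PosDef) (hL : (-(Mᵀ * P + P * M)).PosDef) :
    ∀ μ ∈ spectrum ℂ (M.map (algebraMap ℝ ℂ)), μ.re < 0 := by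
  intro μ hμ
  obtain ⟨v, hv0, hv⟩ := exists_mulVec_eq_smul_of_mem_spectrum hμ
  have hmap : (-(Mᵀ * P + P * M)).map (algebraMap ℝ ℂ) =
      -((M.map (algebraMap ℝ ℂ))ᴴ * P.map (algebraMap ℝ ℂ) +
        P.map (algebraMap ℝ ℂ) * M.map (algebraMap ℝ ℂ)) := by
    rw [← conjTranspose_map _ fun r => by simp, conjTranspose_eq_transpose_of_trivial,
      Matrix.map_neg _ (map_neg _), Matrix.map_add _ (map_add _), Matrix.map_mul, Matrix.map_mul]
  exact re_lt_zero_of_lyapunov hP.map_algebraMap.posSemidef (hmap ▸ hL.map_algebraMap) hv0 hv
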